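/- In the Decision-Adv SP construction of Theorem 2: let c ∈ Û(Γ^d) be any extreme scenario and let A'_y ⊆ A_y be the set of arcs of A_y whose cost under c equals 1 (so |A'_y| ≤ Γ^d). If (y,z) is a 0-1 assignment of 𝕐 ∪ ℤ satisfying ϝ with y_i = 0 for every i such that e_{y_i} ∈ A'_y, then the path Y formed by concatenating the clause path π_1 (from s_1 to t_1), the arc (t_1,s_2), and the variable path π_2 (from s_2 to t_2) corresponding to (y,z) is a simple s–t path with |X∖Y| ≤ 2 (i.e., Y ∈ Φ^excl(X,2)), Y avoids all arcs of A'_y, and ∑_{e∈Y} c_e = 0. -/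

import Mathlib

namespace RRSP

/-- A simple directed `s`–`t` path in the digraph with arc set `A`, given as
the list of its (pairwise distinct) vertices. -/
def IsPath {V : Type*} (A : Set (V × V)) (s t : V) (p : List V) : Prop :=
  List.Chain' (fun u v => (u, v) ∈ A) p ∧ p.head? = some s ∧ p.getLast? = some t ∧ p.Nodup

/-- The arc set of a path given by its vertex list. -/
def pathArcs {V : Type*} [DecidableEq V] (p : List V) : Finset (V × V) :=
  (p.zip p.tail).toFinset

/-- `Φ`: the set of all simple `s`–`t` paths, each identified with its arc set. -/
def Phi {V : Type*} [DecidableEq V] (A : Set (V × V)) (s t : V) : Set (Finset (V × V)) :=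
  { X | ∃ p : List V, IsPath A s t p ∧ pathArcs p = X }

/-- A CNF formula with `m` clauses over variables `Fin N`: clause `j` is a list
of literals.  An assignment satisfies the formula if every clause contains a
true literal. -/
def Satisfies {m N : ℕ} (F : Fin m → List (Fin N × Bool)) (a : Fin N → Bool) : Prop :=
  ∀ j, ∃ l ∈ F j, a l.1 = l.2

/-- Nodes of the variable–clause graph built from a CNF formula with `m`
clauses over `N` variables whose gadgets are chained:
`junction i` are the `N+1` junction nodes between consecutive gadgets
(`junction 0` is the entry of the first gadget, `junction N` the exit of the
last one), `upper i j` (resp. `lower i j`) is the internal node `v̄^{C_j}`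
(resp. `v^{C_j}`) of the gadget of variable `i`, `cl1 j` and `cl2 j` are the
clause nodes `C_j^{(1)}`, `C_j^{(2)}`, and `s1`, `t1` are the terminals of the
clause path. -/
inductive Node (N m : ℕ) where
  | junction : Fin (N + 1) → Node N m
  | upper : Fin N → Fin m → Node N m
  | lower : Fin N → Fin m → Node N m
  | cl1 : Fin m → Node N m
  | cl2 : Fin m → Node N m
  | s1 : Node N m
  | t1 : Node N m
deriving DecidableEq

variable {N m : ℕ}

/-- The `k`-th node on the upper path of the gadget of variable `i`
(`k = 0` is the entry junction, `k = m+1` the exit junction). -/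
def upNode (i : Fin N) (k : Fin (m + 2)) : Node N m :=
  if h0 : k.val = 0 then .junction i.castSucc
  else if h1 : k.val = m + 1 then .junction i.succ
  else .upper i ⟨k.val - 1, by have := k.isLt; omega⟩

/-- The `k`-th node on the lower path of the gadget of variable `i`. -/
def lowNode (i : Fin N) (k : Fin (m + 2)) : Node N m :=
  if h0 : k.val = 0 then .junction i.castSucc
  else if h1 : k.val = m + 1 then .junction i.succ
  else .lower i ⟨k.val - 1, by have := k.isLt; omega⟩

/-- The `m+1` arcs of the upper path of the gadget of variable `i`
(traversing it encodes assigning `i := 0`). -/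
def upperArcs (i : Fin N) : Set (Node N m × Node N m) :=
  Set.range fun k : Fin (m + 1) => (upNode i k.castSucc, upNode i k.succ)

/-- The `m+1` arcs of the lower path of the gadget of variable `i`
(traversing it encodes assigning `i := 1`). -/
def lowerArcs (i : Fin N) : Set (Node N m × Node N m) :=
  Set.range fun k : Fin (m + 1) => (lowNode i k.castSucc, lowNode i k.succ)

/-- All arcs of the variable gadgets. -/
def gadgetArcs : Set (Node N m × Node N m) := ⋃ i, upperArcs i ∪ lowerArcs i

/-- The literal arcs of clause `j`: for a positive literal `v` the arcs
`(C_j^{(1)}, v̄^{C_j})` and `(v̄^{C_j}, C_j^{(2)})`, for a negative literal `¬v`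
the arcs `(C_j^{(1)}, v^{C_j})` and `(v^{C_j}, C_j^{(2)})`. -/
def litArcs (F : Fin m → List (Fin N × Bool)) (j : Fin m) :
    Set (Node N m × Node N m) :=
  { e | ∃ l ∈ F j,
      (l.2 = true ∧ (e = (.cl1 j, .upper l.1 j) ∨ e = (.upper l.1 j, .cl2 j))) ∨
      (l.2 = false ∧ (e = (.cl1 j, .lower l.1 j) ∨ e = (.lower l.1 j, .cl2 j))) }

/-- The arcs `(s1, C_1^{(1)})`, `(C_m^{(2)}, t1)` and `(C_j^{(2)}, C_{j+1}^{(1)})`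
chaining the clause nodes. -/
def chainArcs : Set (Node N m × Node N m) :=
  { e | (∃ h : 0 < m, e = (.s1, .cl1 ⟨0, h⟩)) ∨
        (∃ h : 0 < m, e = (.cl2 ⟨m - 1, by omega⟩, .t1)) ∨
        (∃ j j' : Fin m, j'.val = j.val + 1 ∧ e = (.cl2 j, .cl1 j')) }

/-- The arcs of the variable–clause graph built from the formula `F`. -/
def baseArcs (F : Fin m → List (Fin N × Bool)) : Set (Node N m × Node N m) :=
  gadgetArcs ∪ (⋃ j, litArcs F j) ∪ chainArcs

/-- `s₂`: the entry of the first variable gadget. -/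
def s2 : Node N m := .junction 0

/-- The arc set of the variable path encoding the assignment `a`: the lower
path of the gadget of `i` if `a i = 1`, its upper path if `a i = 0`. -/
def assignArcs (a : Fin N → Bool) : Set (Node N m × Node N m) :=
  ⋃ i, if a i then lowerArcs i else upperArcs i

/-- `t₂`: the exit of the last variable gadget. -/
def t2 : Node N m := .junction (Fin.last N)

/-- The arcs of the graph of the Theorem 2 construction: the variable–clause
graph completed with the three arcs `(s₁,t₁)`, `(t₁,s₂)`, `(s₂,t₂)`. -/
def arcsAdv (F : Fin m → List (Fin N × Bool)) : Set (Node N m × Node N m) :=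
  baseArcs F ∪ {((Node.s1 : Node N m), Node.t1), (Node.t1, s2), (s2, t2)}

/-- The first-stage path `X`, formed by the arcs `(s₁,t₁)`, `(t₁,s₂)`, `(s₂,t₂)`. -/
def Xfs : Finset (Node N m × Node N m) :=
  {((Node.s1 : Node N m), Node.t1), (Node.t1, s2), (s2, t2)}

/-- The index in `Fin (2*n)` of the variable `y_i` (the first `n` variables
are `𝕐`, the last `n` are `ℤ`). -/
def yIdx (n : ℕ) (i : Fin n) : Fin (2 * n) := ⟨i.val, by have := i.isLt; omega⟩

/-- `e_{y_i}`: the distinguished arc of the lower path of the gadget of `y_i`. -/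
def ey (n m : ℕ) (i : Fin n) : Node (2 * n) m × Node (2 * n) m :=
  (lowNode (yIdx n i) (0 : Fin (m + 2)), lowNode (yIdx n i) (1 : Fin (m + 2)))

open Classical in
/-- The nominal second-stage costs: `ĉ_e = 1` for `e ∈ {(s₁,t₁),(s₂,t₂)}`,
`ĉ_e = 0` otherwise. -/
noncomputable def chat (n m : ℕ) : Node (2 * n) m × Node (2 * n) m → ℝ :=
  fun e => if e = ((Node.s1 : Node (2 * n) m), Node.t1) ∨ e = (s2, t2) then 1 else 0

open Classical in
/-- The upper bounds on the second-stage costs: `c̄_e = 1` for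
`e ∈ {(s₁,t₁),(s₂,t₂)} ∪ A_y`, `c̄_e = 0` otherwise. -/
noncomputable def cbar (n m : ℕ) : Node (2 * n) m × Node (2 * n) m → ℝ :=
  fun e => if e = ((Node.s1 : Node (2 * n) m), Node.t1) ∨ e = (s2, t2) ∨
              (∃ i : Fin n, e = ey n m i) then 1 else 0

/-- `Û(Γ)`: the extreme scenarios, i.e. those with `c_e ∈ {ĉ_e, c̄_e}` for all
`e` and at most `Γ` arcs at their upper bounds (deviating from nominal). -/
def Uhat (n m Γ : ℕ) : Set ((Node (2 * n) m × Node (2 * n) m) → ℝ) :=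
  { c | (∀ e, c e = chat n m e ∨ c e = cbar n m e) ∧
        { e | c e ≠ chat n m e }.ncard ≤ Γ }


/-!
A satisfying assignment picks a true literal in every clause. The clause path `π₁` runs through
the nodes of these literals, which lie on the gadget paths that the variable path `π₂` does *not*
take; hence `π₁` and `π₂` are vertex-disjoint and join through `(t₁, s₂)` into a simple path `Y`.
Since `Y` uses `(t₁, s₂)`, it misses at most two arcs of `X`, and it uses neither `(s₁, t₁)` nor
`(s₂, t₂)`. An arc `e_{y_i}` of cost `1` starts the lower path of a gadget with `y_i = 0`, which
`π₂` avoids, so every arc of `Y` costs `0`.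

Both paths are vertex sequences indexed by position. A rank function on nodes, left inverse to
the sequence, makes the path simple and rules out arcs whose endpoints have non-consecutive ranks.
-/

section Paths

variable {V : Type*}

lemma IsPath.mono {A B : Set (V × V)} {s t : V} {p : List V} (h : IsPath A s t p)
    (hAB : A ⊆ B) : IsPath B s t p :=
  ⟨h.1.imp fun _ _ huv => hAB huv, h.2⟩

lemma IsPath.append {A : Set (V × V)} {s u v t : V} {p q : List V} (hp : IsPath A s u p)
    (hq : IsPath A v t q) (huv : (u, v) ∈ A) (hdisj : ∀ x ∈ p, x ∉ q) :
    IsPath A s t (p ++ q) := by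
  obtain ⟨hpc, hps, hpu, hpn⟩ := hp
  obtain ⟨hqc, hqv, hqt, hqn⟩ := hq
  refine ⟨List.isChain_append.2 ⟨hpc, hqc, ?_⟩, ?_, ?_, ?_⟩
  · simp_all
  · simp [List.head?_append, hps]
  · simp [List.getLast?_append, hqt]
  · exact List.nodup_append.2 ⟨hpn, hqn, fun x hx y hy hxy => hdisj x hx (hxy ▸ hy)⟩

lemma head?_map_range (f : ℕ → V) (K : ℕ) : ((List.range (K + 1)).map f).head? = some (f 0) := by
  simp [List.head?_range]

lemma getLast?_map_range (f : ℕ → V) (K : ℕ) :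
    ((List.range (K + 1)).map f).getLast? = some (f K) := by
  simp [List.getLast?_range]

lemma isPath_map_range {A : Set (V × V)} {f : ℕ → V} {r : V → ℕ} {K : ℕ}
    (harc : ∀ p < K, (f p, f (p + 1)) ∈ A) (hr : Set.LeftInvOn r f (Set.Iic K)) :
    IsPath A (f 0) (f K) ((List.range (K + 1)).map f) := by
  refine ⟨List.isChain_iff_getElem.2 fun i hi => ?_, head?_map_range f K,
    getLast?_map_range f K, List.nodup_range.map_on fun x hx y hy => ?_⟩
  · simp only [List.getElem_map, List.getElem_range]
    exact harc i (by simpa using hi)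
  · exact hr.injOn (Set.mem_Iic.2 (Nat.lt_succ_iff.1 (List.mem_range.1 hx)))
      (Set.mem_Iic.2 (Nat.lt_succ_iff.1 (List.mem_range.1 hy)))

variable [DecidableEq V]

lemma pathArcs_singleton (x : V) : pathArcs [x] = ∅ := rfl

lemma pathArcs_cons_cons (x y : V) (l : List V) :
    pathArcs (x :: y :: l) = insert (x, y) (pathArcs (y :: l)) := by
  simp [pathArcs]

lemma pathArcs_append {p q : List V} {u v : V} (hp : p.getLast? = some u)
    (hq : q.head? = some v) : pathArcs (p ++ q) = insert (u, v) (pathArcs p ∪ pathArcs q) := by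
  obtain ⟨q, rfl⟩ : ∃ q', q = v :: q' := by
    cases q with
    | nil => simp at hq
    | cons w q' => exact ⟨q', by simpa using hq⟩
  induction p with
  | nil => simp at hp
  | cons x p ih =>
    cases p with
    | nil =>
      simp only [List.getLast?_singleton, Option.some.injEq] at hp
      simp [hp, pathArcs_cons_cons, pathArcs_singleton]
    | cons y p =>
      rw [List.cons_append, List.cons_append, pathArcs_cons_cons, ← List.cons_append,
        ih (by simpa using hp), pathArcs_cons_cons]
      ext e
      simp only [Finset.mem_insert, Finset.mem_union]
      tauto

lemma mem_of_mem_pathArcs {l : List V} {u v : V} (h : (u, v) ∈ pathArcs l) : u ∈ l ∧ v ∈ l :=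
  have h' := List.of_mem_zip (List.mem_toFinset.1 h)
  ⟨h'.1, List.mem_of_mem_tail h'.2⟩

lemma mem_pathArcs_map_range {f : ℕ → V} {K : ℕ} {e : V × V} :
    e ∈ pathArcs ((List.range (K + 1)).map f) ↔ ∃ p < K, e = (f p, f (p + 1)) := by
  rw [pathArcs, List.mem_toFinset, List.mem_iff_getElem]
  constructor
  · rintro ⟨i, hi, rfl⟩
    exact ⟨i, by simpa using hi, by simp⟩
  · rintro ⟨p, hp, rfl⟩
    exact ⟨p, by simpa using hp, by simp⟩

lemma rank_succ_of_mem_pathArcs_map_range {f : ℕ → V} {r : V → ℕ} {K : ℕ} {u v : V}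
    (hr : Set.LeftInvOn r f (Set.Iic K)) (h : (u, v) ∈ pathArcs ((List.range (K + 1)).map f)) :
    r v = r u + 1 := by
  obtain ⟨p, hp, huv⟩ := mem_pathArcs_map_range.1 h
  simp only [Prod.mk.injEq] at huv
  rw [huv.1, huv.2, hr (Set.mem_Iic.2 hp.le), hr (Set.mem_Iic.2 hp)]

end Paths

def Node.encode : Node N m → Fin (N + 1) ⊕ Fin N × Fin m ⊕ Fin N × Fin m ⊕ Fin m ⊕ Fin m ⊕ Bool
  | .junction i => .inl i
  | .upper i j => .inr (.inl (i, j))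
  | .lower i j => .inr (.inr (.inl (i, j)))
  | .cl1 j => .inr (.inr (.inr (.inl j)))
  | .cl2 j => .inr (.inr (.inr (.inr (.inl j))))
  | .s1 => .inr (.inr (.inr (.inr (.inr true))))
  | .t1 => .inr (.inr (.inr (.inr (.inr false))))

instance : Finite (Node N m) :=
  Finite.of_injective Node.encode fun x y h => by
    cases x <;> cases y <;> simp_all [Node.encode]

/-- The clause path of a satisfying assignment `a` visits only nodes with `clauseSide a = true`
(its literal nodes belong to true literals), the variable path of `a` only the others. -/
def clauseSide (a : Fin N → Bool) : Node N m → Bool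
  | .junction _ => false
  | .upper i _ => a i
  | .lower i _ => !a i
  | _ => true

section ClausePath

def litNode (l : Fin N × Bool) (j : Fin m) : Node N m :=
  if l.2 then .upper l.1 j else .lower l.1 j

lemma clauseSide_litNode {a : Fin N → Bool} {l : Fin N × Bool} (hl : a l.1 = l.2) (j : Fin m) :
    clauseSide a (litNode l j) = true := by
  rcases l with ⟨v, _ | _⟩ <;> simp_all [litNode, clauseSide]

lemma litNode_arcs_mem_litArcs {F : Fin m → List (Fin N × Bool)} {j : Fin m} {l : Fin N × Bool}
    (hl : l ∈ F j) :
    (Node.cl1 j, litNode l j) ∈ litArcs F j ∧ (litNode l j, Node.cl2 j) ∈ litArcs F j := by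
  rcases l with ⟨v, _ | _⟩ <;> exact ⟨⟨_, hl, by simp [litNode]⟩, ⟨_, hl, by simp [litNode]⟩⟩

/-- The `p`-th node of the clause path `s₁, C₁⁽¹⁾, ℓ₁, C₁⁽²⁾, …, Cₘ⁽¹⁾, ℓₘ, Cₘ⁽²⁾, t₁`, where
`ℓⱼ` is the literal node of the literal `l j` chosen in clause `j`. -/
def clauseNode (l : Fin m → Fin N × Bool) (p : ℕ) : Node N m :=
  if h0 : p = 0 then .s1
  else if h : p ≤ 3 * m then
    if (p - 1) % 3 = 0 then .cl1 ⟨(p - 1) / 3, by omega⟩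
    else if (p - 1) % 3 = 1 then litNode (l ⟨(p - 1) / 3, by omega⟩) ⟨(p - 1) / 3, by omega⟩
    else .cl2 ⟨(p - 1) / 3, by omega⟩
  else .t1

variable (l : Fin m → Fin N × Bool)

lemma clauseNode_zero : clauseNode l 0 = .s1 := rfl

lemma clauseNode_last : clauseNode l (3 * m + 1) = .t1 := by
  simp [clauseNode]

lemma clauseNode_cl1 (j : Fin m) : clauseNode l (3 * j + 1) = .cl1 j := by
  have := j.isLt
  simp only [clauseNode, dif_pos (by omega : 3 * j.val + 1 ≤ 3 * m)]
  simp

lemma clauseNode_lit (j : Fin m) : clauseNode l (3 * j + 2) = litNode (l j) j := by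
  have := j.isLt
  simp only [clauseNode, dif_pos (by omega : 3 * j.val + 2 ≤ 3 * m)]
  simp [show (3 * j.val + 1) % 3 = 1 by omega, show (3 * j.val + 1) / 3 = j by omega]

lemma clauseNode_cl2 (j : Fin m) : clauseNode l (3 * j + 3) = .cl2 j := by
  have := j.isLt
  simp only [clauseNode, dif_pos (by omega : 3 * j.val + 3 ≤ 3 * m)]
  simp [show (3 * j.val + 2) % 3 = 2 by omega, show (3 * j.val + 2) / 3 = j by omega]

lemma clausePosition_cases {p : ℕ} (hp : p ≤ 3 * m + 1) :
    p = 0 ∨ p = 3 * m + 1 ∨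
      ∃ j : Fin m, p = 3 * j + 1 ∨ p = 3 * j + 2 ∨ p = 3 * j + 3 := by
  refine or_iff_not_imp_left.2 fun h0 => or_iff_not_imp_left.2 fun hl => ?_
  exact ⟨⟨(p - 1) / 3, by omega⟩, by simp only; omega⟩

def clauseRank : Node N m → ℕ
  | .s1 => 0
  | .cl1 j => 3 * j + 1
  | .upper _ j => 3 * j + 2
  | .lower _ j => 3 * j + 2
  | .cl2 j => 3 * j + 3
  | .t1 => 3 * m + 1
  | .junction _ => 0

lemma clauseRank_litNode (v : Fin N × Bool) (j : Fin m) :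
    clauseRank (litNode v j) = 3 * j + 2 := by
  unfold litNode; split <;> rfl

lemma leftInvOn_clauseRank_clauseNode :
    Set.LeftInvOn clauseRank (clauseNode l) (Set.Iic (3 * m + 1)) := by
  intro p hp
  rcases clausePosition_cases (Set.mem_Iic.1 hp) with rfl | rfl | ⟨j, rfl | rfl | rfl⟩
  · rfl
  · rw [clauseNode_last]; rfl
  · rw [clauseNode_cl1]; rfl
  · rw [clauseNode_lit, clauseRank_litNode]
  · rw [clauseNode_cl2]; rfl

def clauseArcs (F : Fin m → List (Fin N × Bool)) : Set (Node N m × Node N m) :=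
  (⋃ j, litArcs F j) ∪ chainArcs

lemma clauseNode_arc_mem_clauseArcs {F : Fin m → List (Fin N × Bool)} (hm : 0 < m)
    (hl : ∀ j, l j ∈ F j) {p : ℕ} (hp : p < 3 * m + 1) :
    (clauseNode l p, clauseNode l (p + 1)) ∈ clauseArcs F := by
  rcases clausePosition_cases (show p ≤ 3 * m + 1 by omega) with rfl | rfl | ⟨j, rfl | rfl | rfl⟩
  · rw [clauseNode_zero, show 0 + 1 = 3 * (⟨0, hm⟩ : Fin m).val + 1 from rfl, clauseNode_cl1]
    exact Or.inr (Or.inl ⟨hm, rfl⟩)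
  · omega
  · rw [clauseNode_cl1, clauseNode_lit]
    exact Or.inl (Set.mem_iUnion.2 ⟨j, (litNode_arcs_mem_litArcs (hl j)).1⟩)
  · rw [clauseNode_lit, clauseNode_cl2]
    exact Or.inl (Set.mem_iUnion.2 ⟨j, (litNode_arcs_mem_litArcs (hl j)).2⟩)
  · rw [clauseNode_cl2]
    by_cases hj : j.val + 1 < m
    · rw [show 3 * j.val + 3 + 1 = 3 * (⟨j + 1, hj⟩ : Fin m).val + 1 from rfl, clauseNode_cl1]
      exact Or.inr (Or.inr (Or.inr ⟨j, _, rfl, rfl⟩))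
    · rw [show 3 * j.val + 3 + 1 = 3 * m + 1 by omega, clauseNode_last]
      exact Or.inr (Or.inr (Or.inl ⟨hm, by
        rw [show j = ⟨m - 1, by omega⟩ from Fin.ext (by simp only; omega)]⟩))

def clausePath : List (Node N m) := (List.range (3 * m + 1 + 1)).map (clauseNode l)

lemma isPath_clausePath {F : Fin m → List (Fin N × Bool)} (hm : 0 < m) (hl : ∀ j, l j ∈ F j) :
    IsPath (clauseArcs F) .s1 .t1 (clausePath l) := by
  rw [← clauseNode_zero l, ← clauseNode_last l]
  exact isPath_map_range (fun p hp => clauseNode_arc_mem_clauseArcs l hm hl hp)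
    (leftInvOn_clauseRank_clauseNode l)

lemma clauseSide_of_mem_clausePath {a : Fin N → Bool} (hla : ∀ j, a (l j).1 = (l j).2)
    {v : Node N m} (hv : v ∈ clausePath l) : clauseSide a v = true := by
  obtain ⟨p, hp, rfl⟩ := List.mem_map.1 hv
  rcases clausePosition_cases (Nat.lt_succ_iff.1 (List.mem_range.1 hp)) with
    rfl | rfl | ⟨j, rfl | rfl | rfl⟩
  · rfl
  · rw [clauseNode_last]; rfl
  · rw [clauseNode_cl1]; rfl
  · rw [clauseNode_lit, clauseSide_litNode (hla j)]
  · rw [clauseNode_cl2]; rfl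

lemma s1_t1_not_mem_pathArcs_clausePath (hm : 0 < m) :
    ((.s1, .t1) : Node N m × Node N m) ∉ pathArcs (clausePath l) := fun h => by
  have := rank_succ_of_mem_pathArcs_map_range (leftInvOn_clauseRank_clauseNode l) h
  simp only [clauseRank] at this
  omega

end ClausePath

section VariablePath

variable (a : Fin N → Bool)

def gadgetNode (i : Fin N) (k : Fin (m + 2)) : Node N m :=
  if a i then lowNode i k else upNode i k

lemma gadgetNode_of_val_eq_zero (i : Fin N) {k : Fin (m + 2)} (hk : k.val = 0) :
    gadgetNode a i k = .junction i.castSucc := by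
  unfold gadgetNode lowNode upNode; split <;> simp

lemma gadgetNode_last (i : Fin N) : gadgetNode a i (Fin.last (m + 1)) = .junction i.succ := by
  unfold gadgetNode lowNode upNode; split <;> simp

lemma gadgetArc_mem_assignArcs (i : Fin N) (k : Fin (m + 1)) :
    (gadgetNode a i k.castSucc, gadgetNode a i k.succ) ∈ assignArcs a := by
  refine Set.mem_iUnion.2 ⟨i, ?_⟩
  unfold gadgetNode
  split <;> exact ⟨k, rfl⟩

lemma clauseSide_gadgetNode (i : Fin N) (k : Fin (m + 2)) :
    clauseSide a (gadgetNode a i k) = false := by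
  unfold gadgetNode lowNode upNode
  split <;> split_ifs <;> simp_all [clauseSide]

def varRank : Node N m → ℕ
  | .junction i => i * (m + 1)
  | .upper i r => i * (m + 1) + r + 1
  | .lower i r => i * (m + 1) + r + 1
  | _ => 0

lemma varRank_gadgetNode (i : Fin N) (k : Fin (m + 2)) :
    varRank (gadgetNode a i k) = i * (m + 1) + k := by
  unfold gadgetNode lowNode upNode
  split <;> split_ifs <;> simp only [varRank, Fin.val_castSucc, Fin.val_succ] <;> grind

/-- The `p`-th node of the variable path from `s₂` to `t₂` encoding `a`: gadget `i` occupies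
positions `i * (m + 1), …, (i + 1) * (m + 1)`. -/
def varNode (p : ℕ) : Node N m :=
  if h : p < N * (m + 1) then
    gadgetNode a ⟨p / (m + 1), (Nat.div_lt_iff_lt_mul m.succ_pos).2 h⟩
      ⟨p % (m + 1), (Nat.mod_lt p m.succ_pos).trans m.succ.lt_succ_self⟩
  else .junction (Fin.last N)

lemma varNode_eq_gadgetNode (i : Fin N) (k : Fin (m + 2)) :
    varNode (m := m) a (i * (m + 1) + k) = gadgetNode a i k := by
  rcases Fin.eq_castSucc_or_eq_last k with ⟨k, rfl⟩ | rfl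
  · have hlt : i * (m + 1) + k < N * (m + 1) := by
      nlinarith [k.isLt, i.isLt]
    have hdiv : (i * (m + 1) + k) / (m + 1) = i := by
      rw [Nat.add_comm, Nat.add_mul_div_right _ _ m.succ_pos, Nat.div_eq_of_lt k.isLt, zero_add]
    have hmod : (i * (m + 1) + k) % (m + 1) = k := by
      rw [Nat.add_comm, Nat.add_mul_mod_self_right, Nat.mod_eq_of_lt k.isLt]
    rw [Fin.val_castSucc, varNode, dif_pos hlt]
    congr 1 <;> ext
    · exact hdiv
    · exact hmod
  · rw [gadgetNode_last, Fin.val_last, show i * (m + 1) + (m + 1) = (i + 1) * (m + 1) by ring,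
      varNode]
    split_ifs with h
    · rw [gadgetNode_of_val_eq_zero a _ (Nat.mul_mod_left _ _)]
      congr 1
      ext
      exact Nat.mul_div_cancel _ m.succ_pos
    · have := Nat.le_of_mul_le_mul_right (not_lt.1 h) m.succ_pos
      congr 1
      ext
      simp only [Fin.val_last, Fin.val_succ]
      omega

lemma varNode_zero : varNode (m := m) a 0 = s2 := by
  unfold varNode
  split_ifs with h
  · rw [gadgetNode_of_val_eq_zero a _ (Nat.zero_mod _)]
    simp [s2]
  · obtain rfl : N = 0 := by by_contra; exact h (by positivity)
    rfl

lemma varNode_last : varNode (m := m) a (N * (m + 1)) = t2 := by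
  simp [varNode, t2]

lemma exists_eq_gadget_position {p : ℕ} (hp : p < N * (m + 1)) :
    ∃ (i : Fin N) (k : Fin (m + 1)), p = i * (m + 1) + k :=
  ⟨⟨p / (m + 1), (Nat.div_lt_iff_lt_mul m.succ_pos).2 hp⟩, ⟨p % (m + 1), Nat.mod_lt p m.succ_pos⟩,
    (Nat.div_add_mod' p (m + 1)).symm⟩

lemma varNode_arc_eq_gadgetArc (i : Fin N) (k : Fin (m + 1)) :
    (varNode (m := m) a (i * (m + 1) + k), varNode a (i * (m + 1) + k + 1)) =
      (gadgetNode a i k.castSucc, gadgetNode a i k.succ) :=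
  Prod.ext (varNode_eq_gadgetNode a i k.castSucc) (varNode_eq_gadgetNode a i k.succ)

lemma varNode_arc_mem_assignArcs {p : ℕ} (hp : p < N * (m + 1)) :
    (varNode (m := m) a p, varNode a (p + 1)) ∈ assignArcs a := by
  obtain ⟨i, k, rfl⟩ := exists_eq_gadget_position hp
  rw [varNode_arc_eq_gadgetArc]
  exact gadgetArc_mem_assignArcs a i k

lemma leftInvOn_varRank_varNode :
    Set.LeftInvOn varRank (varNode (m := m) a) (Set.Iic (N * (m + 1))) := by
  intro p hp
  rcases (Set.mem_Iic.1 hp).lt_or_eq with hp | rfl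
  · obtain ⟨i, k, rfl⟩ := exists_eq_gadget_position hp
    rw [← Fin.val_castSucc k, varNode_eq_gadgetNode, varRank_gadgetNode]
  · rw [varNode_last]
    simp [t2, varRank]

lemma clauseSide_varNode (p : ℕ) : clauseSide a (varNode (m := m) a p) = false := by
  unfold varNode
  split_ifs
  · exact clauseSide_gadgetNode a _ _
  · rfl

def varPath : List (Node N m) := (List.range (N * (m + 1) + 1)).map (varNode a)

lemma isPath_varPath : IsPath (assignArcs a) s2 t2 (varPath (m := m) a) := by
  rw [← varNode_zero a, ← varNode_last a]
  exact isPath_map_range (fun p hp => varNode_arc_mem_assignArcs a hp)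
    (leftInvOn_varRank_varNode a)

lemma coe_pathArcs_varPath :
    (↑(pathArcs (varPath (m := m) a)) : Set (Node N m × Node N m)) = assignArcs a := by
  ext e
  rw [Finset.mem_coe, varPath, mem_pathArcs_map_range]
  constructor
  · rintro ⟨p, hp, rfl⟩
    exact varNode_arc_mem_assignArcs a hp
  · intro he
    obtain ⟨i, hi⟩ := Set.mem_iUnion.1 he
    obtain ⟨k, rfl⟩ :
        ∃ k : Fin (m + 1), (gadgetNode a i k.castSucc, gadgetNode a i k.succ) = e := by
      unfold gadgetNode; split_ifs at hi ⊢ <;> exact hi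
    exact ⟨i * (m + 1) + k, by nlinarith [i.isLt, k.isLt], (varNode_arc_eq_gadgetArc a i k).symm⟩

lemma s2_t2_not_mem_pathArcs_varPath (hm : 0 < m) :
    ((s2, t2) : Node N m × Node N m) ∉ pathArcs (varPath a) := fun h => by
  have := rank_succ_of_mem_pathArcs_map_range (leftInvOn_varRank_varNode a) h
  simp only [s2, t2, varRank, Fin.val_zero, Fin.val_last, zero_mul, zero_add] at this
  have := Nat.eq_one_of_mul_eq_one_left this
  omega

end VariablePath

section SatisfyingPath

variable {F : Fin m → List (Fin N × Bool)} (l : Fin m → Fin N × Bool) (a : Fin N → Bool)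

lemma clauseArcs_subset_arcsAdv : clauseArcs F ⊆ arcsAdv F :=
  fun _ he => he.elim (fun he => Or.inl (Or.inl (Or.inr he))) fun he => Or.inl (Or.inr he)

lemma assignArcs_subset_arcsAdv : assignArcs a ⊆ arcsAdv F := by
  intro e he
  obtain ⟨i, hi⟩ := Set.mem_iUnion.1 he
  refine Or.inl (Or.inl (Or.inl (Set.mem_iUnion.2 ⟨i, ?_⟩)))
  split_ifs at hi
  exacts [Or.inr hi, Or.inl hi]

lemma clauseSide_of_mem_varPath {v : Node N m} (hv : v ∈ varPath a) : clauseSide a v = false := by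
  obtain ⟨p, -, rfl⟩ := List.mem_map.1 hv
  exact clauseSide_varNode a p

lemma isPath_clausePath_append_varPath (hm : 0 < m) (hl : ∀ j, l j ∈ F j)
    (hla : ∀ j, a (l j).1 = (l j).2) :
    IsPath (arcsAdv F) .s1 t2 (clausePath l ++ varPath a) :=
  ((isPath_clausePath l hm hl).mono clauseArcs_subset_arcsAdv).append
    ((isPath_varPath a).mono (assignArcs_subset_arcsAdv a)) (Or.inr (by simp))
    fun _ hv hv' => by
      simpa [clauseSide_of_mem_clausePath l hla hv] using clauseSide_of_mem_varPath a hv'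

lemma pathArcs_clausePath_append_varPath :
    pathArcs (clausePath l ++ varPath a) =
      insert (.t1, s2) (pathArcs (clausePath l) ∪ pathArcs (varPath (m := m) a)) := by
  refine pathArcs_append ?_ ?_
  · rw [clausePath, getLast?_map_range, clauseNode_last]
  · rw [varPath, head?_map_range, varNode_zero]

variable {l a}

lemma s1_t1_not_mem_pathArcs_clausePath_append_varPath (hm : 0 < m) :
    (.s1, .t1) ∉ pathArcs (clausePath l ++ varPath (m := m) a) := by
  rw [pathArcs_clausePath_append_varPath]
  simp only [Finset.mem_insert, Finset.mem_union, Prod.mk.injEq, reduceCtorEq, false_and,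
    false_or, not_or]
  exact ⟨s1_t1_not_mem_pathArcs_clausePath l hm,
    fun h => by simpa [clauseSide] using clauseSide_of_mem_varPath a (mem_of_mem_pathArcs h).1⟩

lemma s2_t2_not_mem_pathArcs_clausePath_append_varPath (hm : 0 < m)
    (hla : ∀ j, a (l j).1 = (l j).2) :
    (s2, t2) ∉ pathArcs (clausePath l ++ varPath (m := m) a) := by
  rw [pathArcs_clausePath_append_varPath]
  simp only [Finset.mem_insert, Finset.mem_union, not_or]
  refine ⟨by simp [s2], fun h => ?_, s2_t2_not_mem_pathArcs_varPath a hm⟩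
  simpa [s2, clauseSide] using clauseSide_of_mem_clausePath l hla (mem_of_mem_pathArcs h).1

lemma clauseSide_eq_false_of_junction_arc_mem (hla : ∀ j, a (l j).1 = (l j).2)
    {k : Fin (N + 1)} {v : Node N m}
    (h : (.junction k, v) ∈ pathArcs (clausePath l ++ varPath a)) : clauseSide a v = false := by
  rw [pathArcs_clausePath_append_varPath] at h
  simp only [Finset.mem_insert, Finset.mem_union, Prod.mk.injEq, reduceCtorEq, false_and,
    false_or] at h
  rcases h with h | h
  · simpa [clauseSide] using clauseSide_of_mem_clausePath l hla (mem_of_mem_pathArcs h).1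
  · exact clauseSide_of_mem_varPath a (mem_of_mem_pathArcs h).2

end SatisfyingPath

section Costs

variable {n m Γ : ℕ} {c : Node (2 * n) m × Node (2 * n) m → ℝ}

lemma ey_eq (hm : 0 < m) (i : Fin n) :
    ey n m i = (.junction (yIdx n i).castSucc, .lower (yIdx n i) ⟨0, hm⟩) := by
  simp [ey, lowNode, hm.ne']

lemma chat_ey (hm : 0 < m) (i : Fin n) : chat n m (ey n m i) = 0 := by
  simp [chat, ey_eq hm, s2, t2]

lemma ncard_ey_cost_eq_one_le (hm : 0 < m) (hc : c ∈ Uhat n m Γ) :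
    {e | (∃ i, e = ey n m i) ∧ c e = 1}.ncard ≤ Γ := by
  refine (Set.ncard_le_ncard ?_ (Set.toFinite _)).trans hc.2
  rintro _ ⟨⟨i, rfl⟩, hc1⟩
  simp [hc1, chat_ey hm]

lemma apply_eq_zero_of_mem_Uhat (hc : c ∈ Uhat n m Γ) {e : Node (2 * n) m × Node (2 * n) m}
    (h1 : e ≠ (.s1, .t1)) (h2 : e ≠ (s2, t2))
    (h3 : e ∉ {e | (∃ i, e = ey n m i) ∧ c e = 1}) : c e = 0 := by
  rcases hc.1 e with he | he <;> rw [he]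
  · simp [chat, h1, h2]
  · by_cases hey : ∃ i, e = ey n m i
    · simp [cbar, hey, he] at h3
    · simp [cbar, h1, h2, hey]

end Costs

lemma card_Xfs_sdiff_le_two {Y : Finset (Node N m × Node N m)} (hY : (.t1, s2) ∈ Y) :
    (Xfs \ Y).card ≤ 2 := by
  refine (Finset.card_le_card (t := {(.s1, .t1), (s2, t2)}) fun e he => ?_).trans
    Finset.card_le_two
  simp only [Xfs, Finset.mem_sdiff, Finset.mem_insert, Finset.mem_singleton] at he ⊢
  rcases he with ⟨rfl | rfl | rfl, hnot⟩
  exacts [Or.inl rfl, absurd hY hnot, Or.inr rfl]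

theorem stmt7_general (n m Γd : ℕ) (hm : 0 < m)
    (F : Fin m → List (Fin (2 * n) × Bool))
    (c : (Node (2 * n) m × Node (2 * n) m) → ℝ) (hc : c ∈ Uhat n m Γd)
    (A'y : Set (Node (2 * n) m × Node (2 * n) m))
    (hA'y : A'y = { e | (∃ i : Fin n, e = ey n m i) ∧ c e = 1 })
    (a : Fin (2 * n) → Bool) (hsat : Satisfies F a)
    (ha : ∀ i : Fin n, ey n m i ∈ A'y → a (yIdx n i) = false) :
    A'y.ncard ≤ Γd ∧
    ∃ π1 π2 : List (Node (2 * n) m),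
      IsPath (arcsAdv F) .s1 .t1 π1 ∧ IsPath (arcsAdv F) s2 t2 π2 ∧
      (↑(pathArcs π2) : Set (Node (2 * n) m × Node (2 * n) m)) = assignArcs a ∧
      IsPath (arcsAdv F) .s1 t2 (π1 ++ π2) ∧
      (Xfs \ pathArcs (π1 ++ π2)).card ≤ 2 ∧
      (∀ e ∈ A'y, e ∉ pathArcs (π1 ++ π2)) ∧
      ∑ e ∈ pathArcs (π1 ++ π2), c e = 0 := by
  choose l hlF hla using hsat
  have havoid : ∀ e ∈ A'y, e ∉ pathArcs (clausePath l ++ varPath a) := by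
    intro e he hmem
    obtain ⟨⟨i, rfl⟩, -⟩ := hA'y ▸ he
    rw [ey_eq hm] at hmem
    simpa [clauseSide, ha i he] using clauseSide_eq_false_of_junction_arc_mem hla hmem
  have hcost : ∀ e ∈ pathArcs (clausePath l ++ varPath a), c e = 0 := fun e he =>
    apply_eq_zero_of_mem_Uhat hc
      (ne_of_mem_of_not_mem he (s1_t1_not_mem_pathArcs_clausePath_append_varPath hm))
      (ne_of_mem_of_not_mem he (s2_t2_not_mem_pathArcs_clausePath_append_varPath hm hla))
      fun h => havoid e (hA'y ▸ h) he
  exact ⟨hA'y ▸ ncard_ey_cost_eq_one_le hm hc, clausePath l, varPath a,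
    (isPath_clausePath l hm hlF).mono clauseArcs_subset_arcsAdv,
    (isPath_varPath a).mono (assignArcs_subset_arcsAdv a), coe_pathArcs_varPath a,
    isPath_clausePath_append_varPath l a hm hlF hla,
    card_Xfs_sdiff_le_two (by simp [pathArcs_clausePath_append_varPath]), havoid,
    Finset.sum_eq_zero hcost⟩

/-- Theorem 2 construction, direction `⇒`.  Let
`c ∈ Û(Γ^d)` be an extreme scenario and `A'_y ⊆ A_y` the arcs of `A_y` of cost
`1` under `c` (so `|A'_y| ≤ Γ^d`).  If `a` is an assignment of `𝕐 ∪ ℤ`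
satisfying `ϝ` with `y_i = 0` whenever `e_{y_i} ∈ A'_y`, then the path `Y`
obtained by concatenating the clause path `π₁` (from `s₁` to `t₁`), the arc
`(t₁,s₂)`, and the variable path `π₂` (from `s₂` to `t₂`) corresponding to
`a` is a simple `s`–`t` path with `|X ∖ Y| ≤ 2` (i.e. `Y ∈ Φ^excl(X,2)`),
`Y` avoids all arcs of `A'_y`, and `∑_{e ∈ Y} c_e = 0`. -/
theorem stmt7 (n m Γd : ℕ) (hn : 0 < n) (hm : 0 < m)
    (F : Fin m → List (Fin (2 * n) × Bool))
    (c : (Node (2 * n) m × Node (2 * n) m) → ℝ) (hc : c ∈ Uhat n m Γd)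
    (A'y : Set (Node (2 * n) m × Node (2 * n) m))
    (hA'y : A'y = { e | (∃ i : Fin n, e = ey n m i) ∧ c e = 1 })
    (a : Fin (2 * n) → Bool) (hsat : Satisfies F a)
    (ha : ∀ i : Fin n, ey n m i ∈ A'y → a (yIdx n i) = false) :
    A'y.ncard ≤ Γd ∧
    ∃ π1 π2 : List (Node (2 * n) m),
      IsPath (arcsAdv F) .s1 .t1 π1 ∧ IsPath (arcsAdv F) s2 t2 π2 ∧
      (↑(pathArcs π2) : Set (Node (2 * n) m × Node (2 * n) m)) = assignArcs a ∧
      IsPath (arcsAdv F) .s1 t2 (π1 ++ π2) ∧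
      (Xfs \ pathArcs (π1 ++ π2)).card ≤ 2 ∧
      (∀ e ∈ A'y, e ∉ pathArcs (π1 ++ π2)) ∧
      ∑ e ∈ pathArcs (π1 ++ π2), c e = 0 :=
  stmt7_general n m Γd hm F c hc A'y hA'y a hsat ha

end RRSP
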